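/- arXiv:0810.4767 — 5 statements merged into one kernel-verified Lean document; each statement's English description precedes it below -/
import Mathlib

section
/- Let X be a 2n×r complex matrix and Y a 2n×(2n−r) complex matrix, and let K_n be the 2n×2n block matrix with blocks (0, −I_n; I_n, 0). Then the complex conjugate of det[X | K_n·conj(Y)] equals det[Y | K_n·conj(X)], where [A | B] denotes the 2n×2n matrix formed by placing the columns of A followed by the columns of B. -/
open Matrix Complex

/-- The `2n × 2n` matrix with blocks `(0, -I_n; I_n, 0)`. -/
noncomputable def Kmat (n : ℕ) : Matrix (Fin (n + n)) (Fin (n + n)) ℂ :=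
  Matrix.of fun i j =>
    if (i : ℕ) < n then (if (j : ℕ) = (i : ℕ) + n then -1 else 0)
    else (if (i : ℕ) = (j : ℕ) + n then 1 else 0)

/-- Horizontal concatenation `[X | Y]` of the columns of `X` followed by those of `Y`. -/
noncomputable def concatCols {N r s : ℕ} (h : r + s = N)
    (X : Matrix (Fin N) (Fin r) ℂ) (Y : Matrix (Fin N) (Fin s) ℂ) :
    Matrix (Fin N) (Fin N) ℂ :=
  Matrix.of fun i j =>
    if hj : (j : ℕ) < r then X i ⟨j, hj⟩
    else Y i ⟨(j : ℕ) - r, by have := j.isLt; omega⟩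

/-!
Since `K² = -1` and `det K = 1`, multiplying `[A | K B]` on the left by `K` gives `[K A | -B]`,
so `det [A | K B] = (-1)^s det [K A | B]`. Moving the `s` columns of `B` past the `r` columns of
`K A` costs `(-1)^(r s)`, which is `(-1)^s` because `r + s` is even; hence
`det [A | K B] = det [B | K A]`. Conjugating entrywise (the entries of `K` are real) and taking
`A = conj X`, `B = Y` gives the theorem.
-/

lemma coe_finRotate_pow {N : ℕ} (k : ℕ) (j : Fin N) :
    ((finRotate N ^ k) j : ℕ) = (j + k) % N := by
  have := j.neZero
  induction k with
  | zero => simp [Nat.mod_eq_of_lt j.isLt]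
  | succ k ih =>
    rw [pow_succ', Equiv.Perm.mul_apply, finRotate_apply, Fin.val_add, ih, Fin.val_one',
      ← Nat.add_mod, add_assoc]

lemma sign_finRotate_pow {N r s : ℕ} (h : r + s = N) :
    Equiv.Perm.sign (finRotate N ^ r) = (-1) ^ (r * s) := by
  rw [map_pow, sign_finRotate, ← pow_mul]
  rcases r with _ | r
  · simp
  · rw [show (N - 1) * (r + 1) = r * (r + 1) + (r + 1) * s by
      rw [show N - 1 = r + s by omega]; ring]
    rw [pow_add, (Nat.even_mul_succ_self r).neg_one_pow, one_mul]

lemma neg_one_pow_mul_of_even_add {R : Type*} [Ring R] {r s : ℕ} (h : Even (r + s)) :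
    (-1 : R) ^ (r * s) = (-1) ^ s := by
  have hrs : r * s % 2 = s % 2 := by
    obtain ⟨m, hm⟩ := h
    rw [Nat.mul_mod, show r % 2 = s % 2 by omega]
    rcases Nat.mod_two_eq_zero_or_one s with hs | hs <;> simp [hs]
  rw [neg_one_pow_eq_pow_mod_two, hrs, ← neg_one_pow_eq_pow_mod_two]

section ConcatCols

variable {N r s : ℕ}

lemma mul_concatCols (h : r + s = N) (M : Matrix (Fin N) (Fin N) ℂ)
    (A : Matrix (Fin N) (Fin r) ℂ) (B : Matrix (Fin N) (Fin s) ℂ) :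
    M * concatCols h A B = concatCols h (M * A) (M * B) := by
  ext i j
  by_cases hj : (j : ℕ) < r <;>
    simp only [concatCols, mul_apply, of_apply, hj, dite_true, dite_false]

lemma concatCols_map (h : r + s = N) (A : Matrix (Fin N) (Fin r) ℂ)
    (B : Matrix (Fin N) (Fin s) ℂ) (f : ℂ → ℂ) :
    (concatCols h A B).map f = concatCols h (A.map f) (B.map f) := by
  ext i j
  by_cases hj : (j : ℕ) < r <;> simp [concatCols, hj]

lemma prod_ite_val_lt (h : r + s = N) :
    ∏ j : Fin N, (if (j : ℕ) < r then (1 : ℂ) else -1) = (-1) ^ s := by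
  rw [Finset.prod_ite, Finset.prod_const_one, one_mul, Finset.prod_const]
  congr 1
  have hlt := Fin.card_filter_val_lt (n := N) (m := r)
  have hsum := Finset.card_filter_add_card_filter_not (s := Finset.univ)
    (fun j : Fin N => (j : ℕ) < r)
  rw [Finset.card_univ, Fintype.card_fin] at hsum
  omega

lemma concatCols_neg_right (h : r + s = N) (A : Matrix (Fin N) (Fin r) ℂ)
    (B : Matrix (Fin N) (Fin s) ℂ) :
    concatCols h A (-B) =
      concatCols h A B * diagonal (fun j : Fin N => if (j : ℕ) < r then 1 else -1) := by
  ext i j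
  rw [mul_diagonal]
  by_cases hj : (j : ℕ) < r <;> simp [concatCols, hj]

lemma det_concatCols_neg_right (h : r + s = N) (A : Matrix (Fin N) (Fin r) ℂ)
    (B : Matrix (Fin N) (Fin s) ℂ) :
    (concatCols h A (-B)).det = (-1) ^ s * (concatCols h A B).det := by
  rw [concatCols_neg_right, det_mul, det_diagonal, prod_ite_val_lt h, mul_comm]

lemma concatCols_swap (h : r + s = N) (h' : s + r = N)
    (A : Matrix (Fin N) (Fin r) ℂ) (B : Matrix (Fin N) (Fin s) ℂ) :
    concatCols h' B A = (concatCols h A B).submatrix id (finRotate N ^ r) := by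
  ext i j
  have hj := coe_finRotate_pow r j
  by_cases hjs : (j : ℕ) < s
  · rw [Nat.mod_eq_of_lt (by omega)] at hj
    simp [concatCols, hjs, hj]
  · rw [Nat.mod_eq_sub_mod (by omega), Nat.mod_eq_of_lt (by omega),
      show (j : ℕ) + r - N = j - s by omega] at hj
    have : (j : ℕ) - s < r := by omega
    simp [concatCols, hjs, hj, this]

lemma det_concatCols_swap (h : r + s = N) (h' : s + r = N)
    (A : Matrix (Fin N) (Fin r) ℂ) (B : Matrix (Fin N) (Fin s) ℂ) :
    (concatCols h' B A).det = (-1) ^ (r * s) * (concatCols h A B).det := by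
  rw [concatCols_swap h h', det_permute', sign_finRotate_pow h]
  push_cast
  ring

end ConcatCols

lemma Kmat_mul_apply {n c : ℕ} (M : Matrix (Fin (n + n)) (Fin c) ℂ)
    (i : Fin (n + n)) (j : Fin c) :
    (Kmat n * M) i j =
      if hi : (i : ℕ) < n then -M ⟨i + n, by omega⟩ j else M ⟨i - n, by omega⟩ j := by
  rw [mul_apply]
  split_ifs with hi
  · rw [Finset.sum_eq_single ⟨i + n, by omega⟩]
    · simp [Kmat, hi]
    · intro k _ hk
      simp [Kmat, hi, Fin.ext_iff] at hk ⊢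
      omega
    · simp
  · rw [Finset.sum_eq_single ⟨i - n, by omega⟩]
    · simp [Kmat, hi, Nat.sub_add_cancel (le_of_not_gt hi)]
    · intro k _ hk
      simp [Kmat, hi, Fin.ext_iff] at hk ⊢
      omega
    · simp

lemma Kmat_mul_Kmat (n : ℕ) : Kmat n * Kmat n = -1 := by
  ext i j
  rw [Kmat_mul_apply]
  simp only [Kmat, of_apply, Matrix.neg_apply, Matrix.one_apply, Fin.ext_iff]
  split_ifs <;> first | rfl | omega | simp

lemma Kmat_eq_submatrix_diagonal (n : ℕ) :
    Kmat n = (diagonal fun j : Fin (n + n) => if (j : ℕ) < n then (1 : ℂ) else -1).submatrix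
      (finRotate (n + n) ^ n) id := by
  ext i j
  have hi := coe_finRotate_pow n i
  simp only [Kmat, of_apply, submatrix_apply, id, diagonal_apply, Fin.ext_iff]
  by_cases hin : (i : ℕ) < n
  · rw [Nat.mod_eq_of_lt (by omega)] at hi
    split_ifs <;> first | rfl | omega
  · rw [Nat.mod_eq_sub_mod (by omega), Nat.mod_eq_of_lt (by omega)] at hi
    split_ifs <;> first | rfl | omega

lemma det_Kmat (n : ℕ) : (Kmat n).det = 1 := by
  rw [Kmat_eq_submatrix_diagonal, det_permute, det_diagonal, prod_ite_val_lt rfl,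
    sign_finRotate_pow rfl]
  push_cast
  rw [← pow_add, ← mul_add_one, (Nat.even_mul_succ_self n).neg_one_pow]

lemma Kmat_map_conj (n : ℕ) : (Kmat n).map (starRingEnd ℂ) = Kmat n := by
  ext i j
  simp only [Kmat, map_apply, of_apply]
  split_ifs <;> simp

lemma det_concatCols_Kmat_mul_comm {n r s : ℕ} (h : r + s = n + n) (h' : s + r = n + n)
    (A : Matrix (Fin (n + n)) (Fin r) ℂ) (B : Matrix (Fin (n + n)) (Fin s) ℂ) :
    (concatCols h A (Kmat n * B)).det = (concatCols h' B (Kmat n * A)).det :=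
  calc (concatCols h A (Kmat n * B)).det
      = (Kmat n * concatCols h A (Kmat n * B)).det := by rw [det_mul, det_Kmat, one_mul]
    _ = (concatCols h (Kmat n * A) (-B)).det := by
      rw [mul_concatCols, ← Matrix.mul_assoc, Kmat_mul_Kmat, Matrix.neg_mul, Matrix.one_mul]
    _ = (-1) ^ (r * s) * (concatCols h (Kmat n * A) B).det := by
      rw [det_concatCols_neg_right, neg_one_pow_mul_of_even_add ⟨n, h⟩]
    _ = (concatCols h' B (Kmat n * A)).det := (det_concatCols_swap h h' _ _).symm

theorem conj_det_concat (n r s : ℕ) (h : r + s = n + n)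
    (X : Matrix (Fin (n + n)) (Fin r) ℂ) (Y : Matrix (Fin (n + n)) (Fin s) ℂ) :
    (starRingEnd ℂ) (concatCols h X (Kmat n * Y.map (starRingEnd ℂ))).det
      = (concatCols (by omega : s + r = n + n) Y (Kmat n * X.map (starRingEnd ℂ))).det := by
  have hY : (Y.map (starRingEnd ℂ)).map (starRingEnd ℂ) = Y := by ext; simp
  rw [RingHom.map_det, RingHom.mapMatrix_apply, concatCols_map, Matrix.map_mul, Kmat_map_conj,
    hY]
  exact det_concatCols_Kmat_mul_comm h _ _ Y
end

section
/- Let A and B be n×n complex matrices and let T be the 2n×2n block matrix (A, B; −conj(B), conj(A)). Then det T is a nonnegative real number. -/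
/-!
With `J` the standard symplectic matrix, `T * J = J * conj T`, so `v ↦ J * conj v` is a
conjugate-linear map commuting with `T` whose square is `-1`. Hence `charpoly T` has real
coefficients, and for real `μ` the generalized eigenspace of `μ` inherits such a map, which forces
its dimension to be even: in a basis the map is `v ↦ Q * conj v` with `Q * conj Q = -1`, and taking
determinants gives `|det Q|² = (-1) ^ dim`. So the roots of `charpoly T` split as `t + conj t`,
and `det T = ∏ t * conj (∏ t) = |∏ t|²`.
-/

open Matrix Complex

open scoped ComplexConjugate

theorem Multiset.exists_eq_add_self_of_forall_even_count {α : Type*} [DecidableEq α]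
    (s : Multiset α) (h : ∀ a, Even (s.count a)) : ∃ t, s = t + t := by
  refine ⟨∑ a ∈ s.toFinset, (s.count a / 2) • {a}, ?_⟩
  calc s = ∑ a ∈ s.toFinset, s.count a • {a} := (Multiset.toFinset_sum_count_nsmul_eq s).symm
    _ = ∑ a ∈ s.toFinset, ((s.count a / 2) • {a} + (s.count a / 2) • {a}) := by
      refine Finset.sum_congr rfl fun a _ => ?_
      rw [← add_nsmul, ← two_mul, Nat.two_mul_div_two_of_even (h a)]
    _ = _ := Finset.sum_add_distrib

theorem Multiset.exists_eq_add_map_conj (s : Multiset ℂ) (hs : s.map conj = s)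
    (heven : ∀ z : ℂ, z.im = 0 → Even (s.count z)) : ∃ t, s = t + t.map conj := by
  obtain ⟨u, hu⟩ := (s.filter (·.im = 0)).exists_eq_add_self_of_forall_even_count fun z => by
    by_cases hz : z.im = 0 <;> simp [hz, heven]
  have hu_real : u.map conj = u := by
    refine (Multiset.map_congr rfl fun z hz => ?_).trans u.map_id
    have : z ∈ s.filter (·.im = 0) := hu ▸ Multiset.mem_add.2 (Or.inl hz)
    exact Complex.conj_eq_iff_im.2 (Multiset.mem_filter.1 this).2
  have hneg : s.filter (·.im < 0) = (s.filter (0 < ·.im)).map conj := by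
    conv_lhs => rw [← hs]
    rw [Multiset.filter_map]
    congr 1
    exact Multiset.filter_congr fun z _ => by simp
  have hsplit : s = s.filter (0 < ·.im) + s.filter (·.im < 0) + s.filter (·.im = 0) := by
    ext z
    rcases lt_trichotomy z.im 0 with hz | hz | hz
    · simp [hz, hz.ne, lt_asymm hz]
    · simp [hz]
    · simp [hz, hz.ne', lt_asymm hz]
  -- the elements in the upper half plane, and half of the real ones
  refine ⟨s.filter (0 < ·.im) + u, ?_⟩
  rw [Multiset.map_add, hu_real, ← hneg]
  conv_lhs => rw [hsplit, hu]
  abel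

theorem Matrix.even_card_of_mul_map_conj_eq_neg_one {ι : Type*} [Fintype ι] [DecidableEq ι]
    (Q : Matrix ι ι ℂ) (hQ : Q * Q.map conj = -1) : Even (Fintype.card ι) := by
  have hdet := congrArg det hQ
  rw [det_mul, show (Q.map conj).det = conj Q.det from ((starRingEnd ℂ).map_det Q).symm,
    mul_conj, det_neg, det_one, mul_one] at hdet
  by_contra hodd
  rw [Nat.not_even_iff_odd.1 hodd |>.neg_one_pow] at hdet
  have := congrArg Complex.re hdet
  simp only [ofReal_re, neg_re, one_re] at this
  linarith [normSq_nonneg Q.det]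

theorem Module.even_finrank_of_starLinear_apply_apply_eq_neg {E : Type*} [AddCommGroup E]
    [Module ℂ E] [FiniteDimensional ℂ E] (j : E →ₗ⋆[ℂ] E) (hj : ∀ v, j (j v) = -v) :
    Even (finrank ℂ E) := by
  let b := Module.finBasis ℂ E
  let Q : Matrix (Fin (finrank ℂ E)) (Fin (finrank ℂ E)) ℂ := .of fun i k => b.repr (j (b k)) i
  have hj_basis (k : Fin (finrank ℂ E)) : j (b k) = ∑ i, Q i k • b i := (b.sum_repr _).symm
  have hQ : Q * Q.map conj = -1 := by
    ext i l
    have := congrArg (fun v => b.repr v i) (hj (b l))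
    simp only [hj_basis, map_sum, map_smulₛₗ] at this
    simpa [Matrix.mul_apply, Finsupp.single_apply, eq_comm, mul_comm, Matrix.one_apply] using this
  simpa using Q.even_card_of_mul_map_conj_eq_neg_one hQ

theorem LinearMap.even_rootMultiplicity_charpoly {E : Type*} [AddCommGroup E]
    [Module ℂ E] [FiniteDimensional ℂ E] (f : Module.End ℂ E) (j : E →ₗ⋆[ℂ] E)
    (hj : ∀ v, j (j v) = -v) (hfj : ∀ v, j (f v) = f (j v)) {μ : ℂ} (hμ : conj μ = μ) :
    Even (f.charpoly.rootMultiplicity μ) := by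
  have hcomm : Function.Commute j (f - μ • 1 : Module.End ℂ E) := fun v => by
    simp [hfj, hμ]
  have hinv : ∀ v ∈ f.maxGenEigenspace μ, j v ∈ f.maxGenEigenspace μ := by
    simp only [Module.End.mem_maxGenEigenspace, Module.End.pow_apply]
    rintro v ⟨k, hk⟩
    exact ⟨k, by rw [← (hcomm.iterate_right k).eq, hk, map_zero]⟩
  rw [← LinearMap.finrank_maxGenEigenspace_eq]
  exact Module.even_finrank_of_starLinear_apply_apply_eq_neg (j.restrict hinv)
    fun v => Subtype.ext (hj v)

theorem Matrix.star_mulVec_eq_map_conj {m n : Type*} [Fintype n] (M : Matrix m n ℂ) (v : n → ℂ) :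
    star (M *ᵥ v) = M.map conj *ᵥ star v :=
  funext fun i => (starRingEnd ℂ).map_mulVec M v i

section
variable {ι : Type*} [Fintype ι] [DecidableEq ι]

theorem Matrix.charpoly_map_conj (Q T : Matrix ι ι ℂ) (hQ : Q * Q.map conj = -1)
    (hT : T * Q = Q * T.map conj) : T.charpoly.map conj = T.charpoly := by
  have hQ' : Q.map conj * Q = -1 := by
    simpa [Matrix.map_mul, Matrix.map_map, Function.comp_def, Matrix.map_neg] using
      congrArg (starRingEnd ℂ).mapMatrix hQ
  have hconj : T.map conj = -Q.map conj * (T * Q) := by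
    rw [hT, ← mul_assoc, neg_mul, hQ', neg_neg, one_mul]
  rw [← charpoly_map, hconj, charpoly_mul_comm, mul_assoc, mul_neg, hQ, neg_neg, mul_one]

theorem Matrix.even_rootMultiplicity_charpoly (Q T : Matrix ι ι ℂ) (hQ : Q * Q.map conj = -1)
    (hT : T * Q = Q * T.map conj) {μ : ℂ} (hμ : conj μ = μ) :
    Even (T.charpoly.rootMultiplicity μ) := by
  let j : (ι → ℂ) →ₗ⋆[ℂ] (ι → ℂ) := Q.toLin'.comp (starLinearEquiv ℂ).toLinearMap
  have hj_apply (v : ι → ℂ) : j v = Q *ᵥ star v := rfl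
  rw [← charpoly_toLin']
  refine T.toLin'.even_rootMultiplicity_charpoly j (fun v => ?_) (fun v => ?_) hμ
  · rw [hj_apply, hj_apply, star_mulVec_eq_map_conj, star_star, mulVec_mulVec, hQ, neg_mulVec,
      one_mulVec]
  · rw [toLin'_apply, toLin'_apply, hj_apply, hj_apply, star_mulVec_eq_map_conj, mulVec_mulVec,
      mulVec_mulVec, hT]

theorem Matrix.exists_det_eq_normSq (Q T : Matrix ι ι ℂ) (hQ : Q * Q.map conj = -1)
    (hT : T * Q = Q * T.map conj) : ∃ z : ℂ, T.det = normSq z := by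
  have hroots : T.charpoly.roots.map conj = T.charpoly.roots := by
    conv_rhs => rw [← charpoly_map_conj Q T hQ hT]
    exact ((IsAlgClosed.splits _).roots_map _).symm
  obtain ⟨t, ht⟩ := T.charpoly.roots.exists_eq_add_map_conj hroots fun z hz => by
    rw [Polynomial.count_roots]
    exact even_rootMultiplicity_charpoly Q T hQ hT (conj_eq_iff_im.2 hz)
  refine ⟨t.prod, ?_⟩
  rw [det_eq_prod_roots_charpoly, ht, Multiset.prod_add, ← map_multiset_prod, mul_conj]

end

theorem Matrix.J_map_conj (l : Type*) [DecidableEq l] : (J l ℂ).map conj = J l ℂ := by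
  simp [J, fromBlocks_map, Matrix.map_neg]

theorem Matrix.fromBlocks_mul_J {l : Type*} [Fintype l] [DecidableEq l] (A B : Matrix l l ℂ) :
    fromBlocks A B (-B.map conj) (A.map conj) * J l ℂ =
      J l ℂ * (fromBlocks A B (-B.map conj) (A.map conj)).map conj := by
  simp [J, fromBlocks_map, fromBlocks_multiply, Matrix.map_neg, Matrix.map_map, Function.comp_def]

theorem det_blockConj_nonneg (n : ℕ) (A B : Matrix (Fin n) (Fin n) ℂ) :
    ((Matrix.fromBlocks A B (-(B.map (starRingEnd ℂ))) (A.map (starRingEnd ℂ))).det).im = 0 ∧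
    0 ≤ ((Matrix.fromBlocks A B (-(B.map (starRingEnd ℂ))) (A.map (starRingEnd ℂ))).det).re := by
  obtain ⟨z, hz⟩ := exists_det_eq_normSq (J (Fin n) ℂ) _
    (by rw [J_map_conj, J_squared]) (fromBlocks_mul_J A B)
  rw [hz]
  exact ⟨ofReal_im _, normSq_nonneg z⟩
end

section
/- Let A and B be n×n complex matrices, with A and B invertible, and set N = A⁻¹B. If λ is an eigenvalue of conj(N)·N and v is a vector in the generalized eigenspace of conj(N)·N for λ (i.e. (conj(N)·N − λI)^m v = 0 for some m ≥ 1), then conj(N)·conj(v) lies in the generalized eigenspace of conj(N)·N for conj(λ). Consequently, nonreal eigenvalues of conj(N)·N occur in conjugate pairs with equal algebraic multiplicities. -/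
open Matrix Complex Module

/-- `conj(N) * N` for a complex matrix `N`. -/
noncomputable def NbarN {n : ℕ} (N : Matrix (Fin n) (Fin n) ℂ) : Matrix (Fin n) (Fin n) ℂ :=
  N.map (starRingEnd ℂ) * N

/-!
With `C = conj(N)` we have `conj(C * N) = N * C`. The intertwining
`(C * N - c) ^ m * C = C * (N * C - c) ^ m` sends a generalized eigenvector `v` of `C * N`
for `λ` to `C * conj(v)`, because `conj(v)` is a generalized eigenvector of `N * C = conj(C * N)`
for `conj(λ)`. For the multiplicities, `C * N` and `N * C` have the same characteristic polynomial,
so that polynomial is fixed by conjugating its coefficients.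
-/

theorem mul_sub_smul_one_pow_mul_comm {K R : Type*} [CommSemiring K] [Ring R] [Algebra K R]
    (a b : R) (c : K) (m : ℕ) : (a * b - c • 1) ^ m * a = a * (b * a - c • 1) ^ m :=
  (SemiconjBy.pow_right (by simp [SemiconjBy, mul_sub, sub_mul, mul_assoc]) m).eq.symm

theorem Matrix.mul_sub_smul_one_pow_mulVec_mulVec {ι R : Type*} [Fintype ι] [DecidableEq ι]
    [CommRing R] (A B : Matrix ι ι R) (c : R) (m : ℕ) (v : ι → R) :
    (B * A - c • 1) ^ m *ᵥ (B *ᵥ v) = B *ᵥ ((A * B - c • 1) ^ m *ᵥ v) := by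
  rw [mulVec_mulVec, mulVec_mulVec, mul_sub_smul_one_pow_mul_comm]

theorem Matrix.map_sub_smul_one_pow {ι R S : Type*} [Fintype ι] [DecidableEq ι] [CommRing R]
    [CommRing S] (f : R →+* S) (M : Matrix ι ι R) (c : R) (m : ℕ) :
    ((M - c • 1) ^ m).map f = (M.map f - f c • 1) ^ m := by
  rw [← RingHom.mapMatrix_apply, map_pow, map_sub, RingHom.mapMatrix_apply,
    RingHom.mapMatrix_apply, smul_one_eq_diagonal, diagonal_map (map_zero f), smul_one_eq_diagonal]

theorem Matrix.map_starRingEnd_mulVec_star {ι κ : Type*} [Fintype κ] (M : Matrix ι κ ℂ)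
    (v : κ → ℂ) : M.map (starRingEnd ℂ) *ᵥ star v = star (M *ᵥ v) :=
  funext fun i => (RingHom.map_mulVec (starRingEnd ℂ) M v i).symm

theorem map_starRingEnd_NbarN {n : ℕ} (N : Matrix (Fin n) (Fin n) ℂ) :
    (NbarN N).map (starRingEnd ℂ) = N * N.map (starRingEnd ℂ) := by
  simp [NbarN, Matrix.map_map, Function.comp_def]

theorem charpoly_NbarN_map_starRingEnd {n : ℕ} (N : Matrix (Fin n) (Fin n) ℂ) :
    (NbarN N).charpoly.map (starRingEnd ℂ) = (NbarN N).charpoly := by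
  rw [← charpoly_map, map_starRingEnd_NbarN, charpoly_mul_comm, NbarN]

theorem finrank_maxGenEigenspace_NbarN_starRingEnd {n : ℕ} (N : Matrix (Fin n) (Fin n) ℂ)
    (μ : ℂ) :
    finrank ℂ (Module.End.maxGenEigenspace (toLin' (NbarN N)) (starRingEnd ℂ μ))
      = finrank ℂ (Module.End.maxGenEigenspace (toLin' (NbarN N)) μ) := by
  simp only [LinearMap.finrank_maxGenEigenspace_eq, Matrix.charpoly_toLin']
  rw [Polynomial.eq_rootMultiplicity_map (starRingEnd ℂ).injective μ,
    charpoly_NbarN_map_starRingEnd]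

theorem genEigenspace_conj_pair_general (n : ℕ)
    (N : Matrix (Fin n) (Fin n) ℂ)
    (lam : ℂ)
    (v : Fin n → ℂ)
    (hv : ∃ m : ℕ, 1 ≤ m ∧ ((NbarN N - lam • 1) ^ m) *ᵥ v = 0) :
    (∃ m : ℕ, 1 ≤ m ∧
        ((NbarN N - (starRingEnd ℂ) lam • 1) ^ m) *ᵥ (N.map (starRingEnd ℂ) *ᵥ star v) = 0) ∧
    (lam.im ≠ 0 →
      Module.finrank ℂ (Module.End.maxGenEigenspace (Matrix.toLin' (NbarN N)) lam)
        = Module.finrank ℂ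
            (Module.End.maxGenEigenspace (Matrix.toLin' (NbarN N)) ((starRingEnd ℂ) lam))) := by
  obtain ⟨m, hm, hmv⟩ := hv
  refine ⟨⟨m, hm, ?_⟩, fun _ => (finrank_maxGenEigenspace_NbarN_starRingEnd N lam).symm⟩
  rw [NbarN, mul_sub_smul_one_pow_mulVec_mulVec, ← map_starRingEnd_NbarN,
    ← map_sub_smul_one_pow, map_starRingEnd_mulVec_star, hmv, star_zero, mulVec_zero]

theorem genEigenspace_conj_pair (n : ℕ) (A B : Matrix (Fin n) (Fin n) ℂ)
    (hA : IsUnit A.det) (hB : IsUnit B.det)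
    (N : Matrix (Fin n) (Fin n) ℂ) (hN : N = A⁻¹ * B)
    (lam : ℂ) (heig : Module.End.HasEigenvalue (Matrix.toLin' (NbarN N)) lam)
    (v : Fin n → ℂ)
    (hv : ∃ m : ℕ, 1 ≤ m ∧ ((NbarN N - lam • 1) ^ m) *ᵥ v = 0) :
    (∃ m : ℕ, 1 ≤ m ∧
        ((NbarN N - (starRingEnd ℂ) lam • 1) ^ m) *ᵥ (N.map (starRingEnd ℂ) *ᵥ star v) = 0) ∧
    (lam.im ≠ 0 →
      Module.finrank ℂ (Module.End.maxGenEigenspace (Matrix.toLin' (NbarN N)) lam)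
        = Module.finrank ℂ
            (Module.End.maxGenEigenspace (Matrix.toLin' (NbarN N)) ((starRingEnd ℂ) lam))) :=
  genEigenspace_conj_pair_general n N lam v hv
end

section
/- Let N be an invertible n×n complex matrix. Every negative real eigenvalue of the matrix conj(N)·N has even algebraic multiplicity. -/
open Matrix Complex Module

/-!
The map `J v = conj(N) · conj(v)` is conjugate-linear with `J ∘ J = conj(N) · N`. So `J` commutes
with `conj(N) · N` and, `λ` being real, preserves its generalized `λ`-eigenspace `E`, on which
`conj(N) · N` has determinant `λ ^ dim E`. But the square of a conjugate-linear map has determinant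
`conj(d) · d ≥ 0`, where `d` is the determinant of the linear map obtained by composing with
coordinatewise conjugation. For `λ < 0` this forces `dim E` to be even.
-/

theorem Matrix.map_star_mulVec {ι R : Type*} [Fintype ι] [CommSemiring R] [StarRing R]
    (A : Matrix ι ι R) (v : ι → R) : A.map star *ᵥ v = star (A *ᵥ star v) := by
  ext i
  simp [mulVec, dotProduct, star_sum]

theorem Matrix.det_map_star_mul_self_nonneg {ι R : Type*} [Fintype ι] [DecidableEq ι]
    [CommRing R] [PartialOrder R] [StarRing R] [StarOrderedRing R] (A : Matrix ι ι R) :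
    0 ≤ (A.map star * A).det := by
  rw [det_mul, ← conjTranspose_transpose, det_transpose, det_conjTranspose]
  exact star_mul_self_nonneg _

noncomputable def Matrix.toConjLin' {ι R : Type*} [Fintype ι] [DecidableEq ι] [CommSemiring R]
    [StarRing R] (A : Matrix ι ι R) : (ι → R) →ₗ⋆[R] (ι → R) :=
  toLin' A ∘ₛₗ (starLinearEquiv R).toLinearMap

theorem Matrix.toConjLin'_comp_self {ι R : Type*} [Fintype ι] [DecidableEq ι] [CommSemiring R]
    [StarRing R] (A : Matrix ι ι R) : A.toConjLin' ∘ₛₗ A.toConjLin' = toLin' (A * A.map star) := by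
  refine LinearMap.ext fun v => ?_
  simp [toConjLin', Matrix.toLin'_mul, Matrix.map_star_mulVec]

theorem LinearMap.det_eq_pow_finrank_of_isNilpotent_sub {K V : Type*} [Field K]
    [AddCommGroup V] [Module K V] [FiniteDimensional K V] {f : Module.End K V} {μ : K}
    (h : IsNilpotent (f - μ • 1)) : LinearMap.det f = μ ^ finrank K V := by
  have hcp : f.charpoly = (Polynomial.X - Polynomial.C μ) ^ finrank K V := by
    have := congrArg (·.comp (Polynomial.X - Polynomial.C μ)) h.charpoly_eq_X_pow_finrank
    simpa [LinearMap.charpoly_sub_smul, Polynomial.comp_assoc] using this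
  rw [LinearMap.det_eq_sign_charpoly_coeff, hcp, Polynomial.coeff_zero_eq_eval_zero]
  simp [← mul_pow]

theorem LinearMap.det_comp_self_nonneg {K V : Type*} [Field K] [PartialOrder K] [StarRing K]
    [StarOrderedRing K] [AddCommGroup V] [Module K V] [FiniteDimensional K V]
    (J : V →ₗ⋆[K] V) : 0 ≤ LinearMap.det (J ∘ₛₗ J) := by
  let e := (Module.finBasis K V).equivFun
  let A : (Fin (finrank K V) → K) →ₗ[K] _ :=
    (starLinearEquiv K).toLinearMap ∘ₛₗ e.toLinearMap ∘ₛₗ J ∘ₛₗ e.symm.toLinearMap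
  -- In coordinates `J = star ∘ A` with `A` linear, so `J ∘ J = (star ∘ A ∘ star) ∘ A`.
  have hconj : e.toLinearMap ∘ₗ (J ∘ₛₗ J) ∘ₗ e.symm.toLinearMap
      = toLin' ((toMatrix' A).map star * toMatrix' A) := by
    refine LinearMap.ext fun x => ?_
    simp [A, Matrix.toLin'_mul, Matrix.map_star_mulVec]
  rw [← LinearMap.det_conj (J ∘ₛₗ J) e, hconj, det_toLin']
  exact det_map_star_mul_self_nonneg _

theorem Module.End.mapsTo_maxGenEigenspace_of_semilinear_comm {R V : Type*} [CommRing R]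
    [AddCommGroup V] [Module R V] {σ : R →+* R} (f : End R V) (J : V →ₛₗ[σ] V)
    (h : J ∘ₛₗ f = f ∘ₛₗ J) (μ : R) :
    Set.MapsTo J (f.maxGenEigenspace μ) (f.maxGenEigenspace (σ μ)) := by
  have hcomm : ∀ (k : ℕ) (v : V), J (((f - μ • 1) ^ k) v) = ((f - σ μ • 1) ^ k) (J v) := by
    intro k
    induction k with
    | zero => simp
    | succ k ih =>
      intro v
      have hJf : J (f (((f - μ • 1) ^ k) v)) = f (J (((f - μ • 1) ^ k) v)) :=
        LinearMap.congr_fun h _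
      simp [pow_succ', ← ih, hJf]
  rintro v hv
  obtain ⟨k, hk⟩ := (mem_maxGenEigenspace f μ v).mp hv
  exact (mem_maxGenEigenspace f (σ μ) (J v)).mpr ⟨k, by rw [← hcomm, hk, map_zero]⟩

theorem Module.End.isNilpotent_restrict_maxGenEigenspace_sub_smul {R V : Type*} [CommRing R]
    [AddCommGroup V] [Module R V] [IsNoetherian R V] (f : End R V) (μ : R) :
    IsNilpotent (f.restrict (mapsTo_maxGenEigenspace_of_comm (Commute.refl f) μ) - μ • 1) := by
  convert isNilpotent_restrict_maxGenEigenspace_sub_algebraMap f μ using 1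
  ext
  rfl

open scoped ComplexOrder in
theorem LinearMap.even_finrank_maxGenEigenspace_comp_self {V : Type*} [AddCommGroup V]
    [Module ℂ V] [FiniteDimensional ℂ V] (J : V →ₗ⋆[ℂ] V) {lam : ℝ} (hlam : lam < 0) :
    Even (finrank ℂ (Module.End.maxGenEigenspace (J ∘ₛₗ J) (lam : ℂ))) := by
  set f : Module.End ℂ V := J ∘ₛₗ J
  have hJ : Set.MapsTo J (f.maxGenEigenspace lam) (f.maxGenEigenspace lam) := by
    simpa using Module.End.mapsTo_maxGenEigenspace_of_semilinear_comm f J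
      (LinearMap.comp_assoc J J J).symm (lam : ℂ)
  have hdet := LinearMap.det_eq_pow_finrank_of_isNilpotent_sub
    (f.isNilpotent_restrict_maxGenEigenspace_sub_smul lam)
  have hnonneg := LinearMap.det_comp_self_nonneg (J.restrict hJ)
  rw [← LinearMap.restrict_comp, hdet] at hnonneg
  by_contra hodd
  exact (Odd.pow_neg (Nat.not_even_iff_odd.mp hodd) hlam).not_ge (by exact_mod_cast hnonneg)

theorem neg_eigenvalue_even_multiplicity_general (n : ℕ) (N : Matrix (Fin n) (Fin n) ℂ)
    (lam : ℝ) (hlam : lam < 0) :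
    Even (Module.finrank ℂ
      (Module.End.maxGenEigenspace (Matrix.toLin' (NbarN N)) (lam : ℂ))) := by
  have hNbarN : NbarN N = N.map star * (N.map star).map star := by
    rw [Matrix.map_map, star_involutive.comp_self, Matrix.map_id]
    rfl
  rw [hNbarN, ← toConjLin'_comp_self]
  exact LinearMap.even_finrank_maxGenEigenspace_comp_self _ hlam

theorem neg_eigenvalue_even_multiplicity (n : ℕ) (N : Matrix (Fin n) (Fin n) ℂ)
    (hN : IsUnit N.det) (lam : ℝ) (hlam : lam < 0)
    (heig : Module.End.HasEigenvalue (Matrix.toLin' (NbarN N)) (lam : ℂ)) :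
    Even (Module.finrank ℂ
      (Module.End.maxGenEigenspace (Matrix.toLin' (NbarN N)) (lam : ℂ))) :=
  neg_eigenvalue_even_multiplicity_general n N lam hlam
end

section
/- Let λ_1, …, λ_n be distinct complex numbers such that conj(λ_j) ≠ ±i·λ_l for all j, l ∈ {1,…,n}, and let ε ∈ {1, −1}. Let V be the n×n matrix with entries V_{jk} = λ_j^{n−k}, E = diag((iε)^{n−1}, (iε)^{n−2}, …, (iε), 1), and W = conj(V)·conj(E)·V⁻¹. Then the (j,k) entry of W equals ∏_{s≠k} (−iε·conj(λ_j) − λ_s)/(λ_k − λ_s), and moreover conj(W)·W = I. -/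
open Matrix Complex Finset Polynomial ComplexConjugate

/-! The matrix `W = conj V · conj E · V⁻¹` is the matrix of Lagrange interpolation at the nodes
`λ_k`, evaluated at the points `μ_j = -iε · conj λ_j`: indeed `conj V · conj E` is the
Vandermonde-type matrix of the `μ_j`, and Lagrange interpolation reproduces every monomial of
degree `< n`, so `W · V = V(μ)`. For `conj W · W = I` one only needs `E · conj E = I`, which holds
since `|iε| = 1`. -/

/-- The Vandermonde-type matrix with entries `V j k = (λ j)^(n-1-k)`. -/
noncomputable def Vmat {n : ℕ} (lam : Fin n → ℂ) : Matrix (Fin n) (Fin n) ℂ :=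
  Matrix.of fun j k => lam j ^ (n - 1 - (k : ℕ))

/-- The diagonal matrix `E = diag((iε)^(n-1), …, (iε), 1)`. -/
noncomputable def Emat (n : ℕ) (ε : ℂ) : Matrix (Fin n) (Fin n) ℂ :=
  Matrix.diagonal fun k => (Complex.I * ε) ^ (n - 1 - (k : ℕ))

theorem sum_lagrange_mul_pow {F ι : Type*} [Field F] [Fintype ι] [DecidableEq ι] {v : ι → F}
    (hv : Function.Injective v) (x : F) {d : ℕ} (hd : d < Fintype.card ι) :
    ∑ k, (∏ s ∈ univ.erase k, (x - v s) / (v k - v s)) * v k ^ d = x ^ d := by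
  have hdeg : (X ^ d : F[X]).degree < (univ : Finset ι).card := by
    rw [degree_X_pow, card_univ]; exact_mod_cast hd
  have h := congrArg (eval x) (Lagrange.eq_interpolate hv.injOn hdeg)
  simp only [Lagrange.interpolate_apply, eval_finsetSum, eval_mul, eval_C, eval_pow, eval_X,
    Lagrange.basis, eval_prod, Lagrange.basisDivisor, eval_sub] at h
  rw [h]
  refine sum_congr rfl fun k _ => ?_
  rw [mul_comm]
  simp only [div_eq_inv_mul]

section Vandermonde

variable {n : ℕ}

theorem Vmat_map (f : ℂ →+* ℂ) (lam : Fin n → ℂ) : (Vmat lam).map f = Vmat (f ∘ lam) := by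
  ext j k
  simp [Vmat]

theorem Vmat_mul_diagonal_pow (lam : Fin n → ℂ) (a : ℂ) :
    Vmat lam * diagonal (fun k : Fin n => a ^ (n - 1 - (k : ℕ))) = Vmat fun j => a * lam j := by
  ext j k
  simp [Vmat, mul_pow, mul_comm]

theorem isUnit_det_Vmat {lam : Fin n → ℂ} (hinj : Function.Injective lam) :
    IsUnit (Vmat lam).det := by
  have hrev : Vmat lam = (vandermonde lam).submatrix id Fin.revPerm := by
    ext j k
    simp [Vmat, vandermonde, Fin.revPerm, Fin.rev, Nat.sub_sub, Nat.add_comm]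
  rw [hrev, det_permute', isUnit_iff_ne_zero]
  exact mul_ne_zero (by simp) (det_vandermonde_ne_zero_iff.mpr hinj)

noncomputable def lagrangeMatrix (lam μ : Fin n → ℂ) : Matrix (Fin n) (Fin n) ℂ :=
  of fun j k => ∏ s ∈ univ.erase k, (μ j - lam s) / (lam k - lam s)

theorem lagrangeMatrix_mul_Vmat {lam : Fin n → ℂ} (hinj : Function.Injective lam)
    (μ : Fin n → ℂ) : lagrangeMatrix lam μ * Vmat lam = Vmat μ := by
  ext j m
  simpa [mul_apply, lagrangeMatrix, Vmat] using
    sum_lagrange_mul_pow hinj (μ j) (d := n - 1 - m) (by simp; omega)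

theorem Vmat_mul_inv_Vmat {lam : Fin n → ℂ} (hinj : Function.Injective lam) (μ : Fin n → ℂ) :
    Vmat μ * (Vmat lam)⁻¹ = lagrangeMatrix lam μ := by
  rw [← lagrangeMatrix_mul_Vmat hinj μ, mul_nonsing_inv_cancel_right _ _ (isUnit_det_Vmat hinj)]

theorem Emat_map_conj {ε : ℂ} (hε : conj ε = ε) :
    (Emat n ε).map (starRingEnd ℂ) =
      diagonal fun k : Fin n => (-(I * ε)) ^ (n - 1 - (k : ℕ)) := by
  ext j k
  by_cases hjk : j = k <;> simp [Emat, hjk, hε]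

theorem Emat_mul_map_conj {ε : ℂ} (hε : ‖ε‖ = 1) :
    Emat n ε * (Emat n ε).map (starRingEnd ℂ) = 1 := by
  have hunit : I * ε * conj (I * ε) = 1 := by rw [mul_conj', norm_mul, norm_I, hε]; norm_num
  rw [Emat, diagonal_map (map_zero _), diagonal_mul_diagonal, ← diagonal_one]
  congr 1
  funext k
  rw [map_pow, ← mul_pow, hunit, one_pow]

end Vandermonde

theorem map_mul_self_eq_one_of_mul_map_eq_one {ι R : Type*} [Fintype ι] [DecidableEq ι]
    [CommRing R] (f : R →+* R) (hf : Function.Involutive f) {A D : Matrix ι ι R}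
    (hA : IsUnit A.det) (hD : D * D.map f = 1) :
    (A.map f * D.map f * A⁻¹).map f * (A.map f * D.map f * A⁻¹) = 1 := by
  have hff : ∀ M : Matrix ι ι R, (M.map f).map f = M := fun M => by ext; simp [hf _]
  have hinv : (A⁻¹).map f * A.map f = 1 := by
    rw [← Matrix.map_mul, nonsing_inv_mul _ hA, Matrix.map_one _ (map_zero f) (map_one f)]
  simp only [Matrix.map_mul, hff]
  calc A * D * A⁻¹.map f * (A.map f * D.map f * A⁻¹)
      = A * (D * (A⁻¹.map f * A.map f) * D.map f) * A⁻¹ := by simp only [Matrix.mul_assoc]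
    _ = 1 := by rw [hinv, Matrix.mul_one, hD, Matrix.mul_one, mul_nonsing_inv _ hA]

theorem conjV_conjE_Vinv_general (n : ℕ) (lam : Fin n → ℂ)
    (hinj : Function.Injective lam)
    (ε : ℂ) (hε : ε = 1 ∨ ε = -1) :
    (∀ j k, ((Vmat lam).map (starRingEnd ℂ) * (Emat n ε).map (starRingEnd ℂ) *
        (Vmat lam)⁻¹) j k =
      ∏ s ∈ Finset.univ.erase k,
        ((-(Complex.I * ε) * (starRingEnd ℂ) (lam j) - lam s) / (lam k - lam s))) ∧
    ((Vmat lam).map (starRingEnd ℂ) * (Emat n ε).map (starRingEnd ℂ) *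
        (Vmat lam)⁻¹).map (starRingEnd ℂ) *
      ((Vmat lam).map (starRingEnd ℂ) * (Emat n ε).map (starRingEnd ℂ) * (Vmat lam)⁻¹) = 1 := by
  have hreal : conj ε = ε := by rcases hε with rfl | rfl <;> simp
  have hnorm : ‖ε‖ = 1 := by rcases hε with rfl | rfl <;> simp
  have hW : (Vmat lam).map (starRingEnd ℂ) * (Emat n ε).map (starRingEnd ℂ) * (Vmat lam)⁻¹ =
      lagrangeMatrix lam fun j => -(I * ε) * conj (lam j) := by
    rw [Vmat_map, Emat_map_conj hreal, Vmat_mul_diagonal_pow, Vmat_mul_inv_Vmat hinj]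
    rfl
  refine ⟨fun j k => by rw [hW]; rfl, ?_⟩
  exact map_mul_self_eq_one_of_mul_map_eq_one _ (fun z => conj_conj z) (isUnit_det_Vmat hinj)
    (Emat_mul_map_conj hnorm)

theorem conjV_conjE_Vinv (n : ℕ) (lam : Fin n → ℂ)
    (hinj : Function.Injective lam)
    (hil : ∀ j l, (starRingEnd ℂ) (lam j) ≠ Complex.I * lam l ∧
      (starRingEnd ℂ) (lam j) ≠ -(Complex.I * lam l))
    (ε : ℂ) (hε : ε = 1 ∨ ε = -1) :
    (∀ j k, ((Vmat lam).map (starRingEnd ℂ) * (Emat n ε).map (starRingEnd ℂ) *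
        (Vmat lam)⁻¹) j k =
      ∏ s ∈ Finset.univ.erase k,
        ((-(Complex.I * ε) * (starRingEnd ℂ) (lam j) - lam s) / (lam k - lam s))) ∧
    ((Vmat lam).map (starRingEnd ℂ) * (Emat n ε).map (starRingEnd ℂ) *
        (Vmat lam)⁻¹).map (starRingEnd ℂ) *
      ((Vmat lam).map (starRingEnd ℂ) * (Emat n ε).map (starRingEnd ℂ) * (Vmat lam)⁻¹) = 1 :=
  conjV_conjE_Vinv_general n lam hinj ε hε
end
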